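/- The Peierls stability condition holds at k = h for the Hamiltonian H(η) = -Σ_{x~y} η_x η_y - h Σ_x η_x - (d+k) Σ_x (1-η_x²): there exists τ > 0 (namely τ = 1) such that for every finite nonempty V ⊂ ℤ^d, H(η^V) - H(η^0) ≥ τ |∂V|. -/
import Mathlib


/-- Nearest neighbors in `ℤ^d`: Euclidean (equivalently ℓ¹) distance 1. -/
def latNN {d : ℕ} (x y : Fin d → ℤ) : Prop :=
  (∑ i, (x i - y i).natAbs) = 1

instance {d : ℕ} (x y : Fin d → ℤ) : Decidable (latNN x y) := by
  unfold latNN; infer_instance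

/-- The finite set of (ordered versions of the) nearest neighbors of `x`,
i.e. `x ± e_i`, encoded via `Fin d × Bool`. -/
def nbr {d : ℕ} (x : Fin d → ℤ) (p : Fin d × Bool) : Fin d → ℤ :=
  Function.update x p.1 (x p.1 + if p.2 then 1 else -1)

/-- Number of ordered nearest-neighbor pairs `(x,y)` with both `x,y ∈ V`
(each unordered inner bond is counted twice). -/
def innerPairs {d : ℕ} (V : Finset (Fin d → ℤ)) : ℕ :=
  ∑ x ∈ V, ((Finset.univ : Finset (Fin d × Bool)).filter fun p => nbr x p ∈ V).card

/-- `|∂V|`: number of nearest-neighbor pairs `{x,y}` with `x ∈ V`, `y ∉ V`.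
(Each such unordered pair is counted exactly once, since `x ∈ V`, `y ∉ V`
fixes the orientation.) -/
def boundaryCard {d : ℕ} (V : Finset (Fin d → ℤ)) : ℕ :=
  ∑ x ∈ V, ((Finset.univ : Finset (Fin d × Bool)).filter fun p => nbr x p ∉ V).card

/-- The (absolutely convergent) energy difference `H(η^V) - H(η^0)` for the
Hamiltonian `H(η) = -∑_{x~y} η_x η_y - h ∑_x η_x - (d+k) ∑_x (1-η_x²)`,
where `η^V` is `+1` on `V` and `0` elsewhere and `η^0 ≡ 0`:
the bond terms contribute `-1` for each unordered nearest-neighbor bond inside `V`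
(i.e. `-(1/2)·innerPairs V`), the field term `-h∑η_x` contributes `-h·|V|`, and the
term `-(d+k)∑(1-η_x²)` changes by `+(d+k)·|V|`. -/
noncomputable def deltaH (d : ℕ) (h k : ℝ) (V : Finset (Fin d → ℤ)) : ℝ :=
  -(1 / 2 : ℝ) * (innerPairs V : ℝ) - h * (V.card : ℝ) + ((d : ℝ) + k) * (V.card : ℝ)
/-- The Peierls stability condition at `k = h`: there exists `τ > 0` such that
for every finite nonempty `V ⊂ ℤ^d`, `H(η^V) - H(η^0) ≥ τ |∂V|`. -/
theorem peierls_stability (d : ℕ) (hd : 0 < d) (h k : ℝ) (hk : k = h) :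
    ∃ τ : ℝ, 0 < τ ∧ ∀ V : Finset (Fin d → ℤ), V.Nonempty →
      τ * (boundaryCard V : ℝ) ≤ deltaH d h k V := by
  refine ⟨1/2, by norm_num, fun V _ => ?_⟩
  have hsum : innerPairs V + boundaryCard V = 2 * d * V.card := by
    unfold innerPairs boundaryCard
    rw [← Finset.sum_add_distrib]
    have : ∀ x ∈ V, ((Finset.univ : Finset (Fin d × Bool)).filter fun p => nbr x p ∈ V).card
        + ((Finset.univ : Finset (Fin d × Bool)).filter fun p => nbr x p ∉ V).card
        = 2 * d := by
      intro x _
      rw [Finset.card_filter_add_card_filter_not]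
      simp [Finset.card_univ, mul_comm]
    rw [Finset.sum_congr rfl this, Finset.sum_const, smul_eq_mul, mul_comm]
  have hI : (innerPairs V : ℝ) = 2 * d * V.card - boundaryCard V := by
    have := congrArg (Nat.cast (R := ℝ)) hsum
    push_cast at this ⊢
    linarith
  unfold deltaH
  rw [hk, hI]
  ring_nf
  linarith
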